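/- Let h : [0,1] → (0,∞) be continuous, and of class C² on (0,1]. For t ∈ (0,1] define F(t) = ∫₀ᵗ (x⁷/h(x))·(t²−x²) dx, and let D denote the operator D(u)(t) = u'(t)/t. Then for every t ∈ (0,1], t·(D⁴F)(t) = 2·( 24t³/h(t) − (t⁵h''(t) + 11t⁴h'(t))/h(t)² + 2t⁵h'(t)²/h(t)³ ). -/

import Mathlib

open Set

/-- The operator `D(u)(t) = u'(t)/t`, derivatives taken within `(0,1]` (so that
the derivative at `t = 1` is one-sided). -/
noncomputable def Dop (u : ℝ → ℝ) : ℝ → ℝ :=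
  fun t => derivWithin u (Ioc 0 1) t / t

/-- Explicit computation of the inverse spherical Radon transform in dimension six:
for `h : [0,1] → (0,∞)` continuous and `C²` on `(0,1]`, with
`F(t) = ∫₀ᵗ (x⁷/h(x))·(t²−x²) dx` and `D(u)(t) = u'(t)/t`, one has for every
`t ∈ (0,1]`:
`t·(D⁴F)(t) = 2(24t³/h(t) − (t⁵h''(t) + 11t⁴h'(t))/h(t)² + 2t⁵h'(t)²/h(t)³)`. -/
theorem inverse_radon_dim6_formula
    (h : ℝ → ℝ)
    (h_pos : ∀ t ∈ Icc (0 : ℝ) 1, 0 < h t)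
    (h_cont : ContinuousOn h (Icc 0 1))
    (h_C2 : ContDiffOn ℝ 2 h (Ioc 0 1)) :
    ∀ t ∈ Ioc (0 : ℝ) 1,
      t * (Dop^[4] (fun s => ∫ x in (0 : ℝ)..s, x ^ 7 / h x * (s ^ 2 - x ^ 2))) t =
      2 * (24 * t ^ 3 / h t
        - (t ^ 5 * derivWithin (derivWithin h (Ioc 0 1)) (Ioc 0 1) t
            + 11 * t ^ 4 * derivWithin h (Ioc 0 1) t) / (h t) ^ 2
        + 2 * t ^ 5 * (derivWithin h (Ioc 0 1) t) ^ 2 / (h t) ^ 3) := by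
  have hUD : UniqueDiffOn ℝ (Ioc (0:ℝ) 1) := uniqueDiffOn_Ioc 0 1
  have hsub : Ioc (0:ℝ) 1 ⊆ Icc 0 1 := Ioc_subset_Icc_self
  -- clamp function and extension g of h
  set c : ℝ → ℝ := fun x => min (max x 0) 1 with hc_def
  have hc_cont : Continuous c := (continuous_id.max continuous_const).min continuous_const
  have hc_mem : ∀ x, c x ∈ Icc (0:ℝ) 1 := fun x =>
    ⟨le_min (le_max_right _ _) zero_le_one, min_le_right _ _⟩
  have hc_eq : ∀ x ∈ Icc (0:ℝ) 1, c x = x := by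
    intro x hx
    simp only [hc_def, max_eq_left hx.1, min_eq_left hx.2]
  set g : ℝ → ℝ := fun x => h (c x) with hg_def
  have hg_cont : Continuous g := h_cont.comp_continuous hc_cont hc_mem
  have hg_pos : ∀ x, 0 < g x := fun x => h_pos _ (hc_mem x)
  have hg_eq : ∀ x ∈ Icc (0:ℝ) 1, g x = h x := by
    intro x hx; simp only [hg_def, hc_eq x hx]
  -- the two auxiliary integrands
  set φ : ℝ → ℝ := fun x => x ^ 7 / g x with hφ_def
  set ψ : ℝ → ℝ := fun x => x ^ 9 / g x with hψ_def
  have hφ_cont : Continuous φ := (continuous_pow 7).div hg_cont fun x => (hg_pos x).ne'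
  have hψ_cont : Continuous ψ := (continuous_pow 9).div hg_cont fun x => (hg_pos x).ne'
  set A : ℝ → ℝ := fun s => ∫ x in (0:ℝ)..s, φ x with hA_def
  set B : ℝ → ℝ := fun s => ∫ x in (0:ℝ)..s, ψ x with hB_def
  have hA : ∀ s, HasDerivAt A (φ s) s := fun s =>
    (hφ_cont.integral_hasStrictDerivAt 0 s).hasDerivAt
  have hB : ∀ s, HasDerivAt B (ψ s) s := fun s =>
    (hψ_cont.integral_hasStrictDerivAt 0 s).hasDerivAt
  set F : ℝ → ℝ := fun s => ∫ x in (0:ℝ)..s, x ^ 7 / h x * (s ^ 2 - x ^ 2) with hF_def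
  set Ft : ℝ → ℝ := fun s => s ^ 2 * A s - B s with hFt_def
  -- F = Ft on Ioc 0 1
  have hFFt : EqOn F Ft (Ioc 0 1) := by
    intro s hs
    have h1 : F s = ∫ x in (0:ℝ)..s, (s ^ 2 * φ x - ψ x) := by
      apply intervalIntegral.integral_congr
      intro x hx
      rw [uIcc_of_le hs.1.le] at hx
      have hxI : x ∈ Icc (0:ℝ) 1 := ⟨hx.1, hx.2.trans hs.2⟩
      have hgx : g x = h x := hg_eq x hxI
      have hhx : h x ≠ 0 := (h_pos x hxI).ne'
      simp only [hφ_def, hψ_def, hgx]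
      field_simp
    rw [h1, intervalIntegral.integral_sub
      ((hφ_cont.intervalIntegrable 0 s).const_mul (s ^ 2))
      (hψ_cont.intervalIntegrable 0 s), intervalIntegral.integral_const_mul]
  -- derivative of Ft
  have hFt' : ∀ s : ℝ, HasDerivAt Ft (2 * s * A s) s := by
    intro s
    have h1 : HasDerivAt (fun u : ℝ => u ^ 2) (2 * s) s := by
      simpa using hasDerivAt_pow 2 s
    have h2 := (h1.mul (hA s)).sub (hB s)
    have h3 : 2 * s * A s + s ^ 2 * φ s - ψ s = 2 * s * A s := by
      simp only [hφ_def, hψ_def]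
      field_simp
      ring
    rw [h3] at h2
    exact h2
  set S := Ioc (0:ℝ) 1
  -- Step 1 : Dop F = 2 A on S
  have step1 : EqOn (Dop F) (fun t => 2 * A t) S := by
    intro t ht
    have hd : derivWithin F S t = 2 * t * A t := by
      rw [derivWithin_congr hFFt (hFFt ht)]
      exact ((hFt' t).hasDerivWithinAt).derivWithin (hUD t ht)
    show derivWithin F S t / t = 2 * A t
    rw [hd]
    field_simp [ht.1.ne']
  -- key congruence
  have key : ∀ u v : ℝ → ℝ, EqOn u v S → EqOn (Dop u) (Dop v) S := by
    intro u v huv t ht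
    simp only [Dop]
    exact congrArg (· / t) (derivWithin_congr huv (huv ht))
  -- Step 2 : Dop (2A) = 2 t^6 / h t on S
  set G2 : ℝ → ℝ := fun t => 2 * t ^ 6 / h t with hG2_def
  have step2 : EqOn (Dop (fun t => 2 * A t)) G2 S := by
    intro t ht
    have hd : derivWithin (fun t => 2 * A t) S t = 2 * φ t :=
      (((hA t).const_mul 2).hasDerivWithinAt).derivWithin (hUD t ht)
    have hgt : g t = h t := hg_eq t (hsub ht)
    show derivWithin (fun t => 2 * A t) S t / t = G2 t
    rw [hd]
    simp only [hφ_def, hG2_def, hgt]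
    field_simp [ht.1.ne', (h_pos t (hsub ht)).ne']
  -- derivatives of h within S
  set h' : ℝ → ℝ := derivWithin h S with hh'_def
  set h'' : ℝ → ℝ := derivWithin h' S with hh''_def
  have hdh : ∀ t ∈ S, HasDerivWithinAt h (h' t) S t := fun t ht =>
    ((h_C2.differentiableOn (by norm_num)) t ht).hasDerivWithinAt
  have hh'C1 : ContDiffOn ℝ 1 h' S := h_C2.derivWithin hUD (by norm_num)
  have hdh' : ∀ t ∈ S, HasDerivWithinAt h' (h'' t) S t := fun t ht =>
    ((hh'C1.differentiableOn one_ne_zero) t ht).hasDerivWithinAt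
  have hne : ∀ t ∈ S, h t ≠ 0 := fun t ht => (h_pos t (hsub ht)).ne'
  -- Step 3 : Dop G2 = G3 on S
  set G3 : ℝ → ℝ := fun t => 12 * t ^ 4 / h t - 2 * t ^ 5 * h' t / (h t) ^ 2 with hG3_def
  have step3 : EqOn (Dop G2) G3 S := by
    intro t ht
    have hnum : HasDerivWithinAt (fun s : ℝ => 2 * s ^ 6) (12 * t ^ 5) S t := by
      have h0 := ((hasDerivAt_pow 6 t).const_mul 2).hasDerivWithinAt (s := S)
      refine h0.congr_deriv ?_
      push_cast
      ring
    have hdiv := hnum.div (hdh t ht) (hne t ht)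
    have hd : derivWithin G2 S t =
        (12 * t ^ 5 * h t - 2 * t ^ 6 * h' t) / (h t) ^ 2 :=
      hdiv.derivWithin (hUD t ht)
    show derivWithin G2 S t / t = G3 t
    rw [hd]
    simp only [hG3_def]
    field_simp [ht.1.ne', hne t ht]
  -- Step 4 : derivative of G3
  have final : ∀ t ∈ S, t * Dop G3 t =
      2 * (24 * t ^ 3 / h t - (t ^ 5 * h'' t + 11 * t ^ 4 * h' t) / (h t) ^ 2
        + 2 * t ^ 5 * (h' t) ^ 2 / (h t) ^ 3) := by
    intro t ht
    have hpow4 : HasDerivWithinAt (fun s : ℝ => 12 * s ^ 4) (48 * t ^ 3) S t := by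
      have h0 := ((hasDerivAt_pow 4 t).const_mul 12).hasDerivWithinAt (s := S)
      refine h0.congr_deriv ?_
      push_cast
      ring
    have term1 := hpow4.div (hdh t ht) (hne t ht)
    have hpow5 : HasDerivWithinAt (fun s : ℝ => 2 * s ^ 5) (10 * t ^ 4) S t := by
      have h0 := ((hasDerivAt_pow 5 t).const_mul 2).hasDerivWithinAt (s := S)
      refine h0.congr_deriv ?_
      push_cast
      ring
    have hnum2 : HasDerivWithinAt (fun s : ℝ => 2 * s ^ 5 * h' s)
        (10 * t ^ 4 * h' t + 2 * t ^ 5 * h'' t) S t := hpow5.mul (hdh' t ht)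
    have hden2 : HasDerivWithinAt (fun s : ℝ => (h s) ^ 2)
        (2 * (h t) ^ 1 * h' t) S t := (hdh t ht).pow 2
    have hden2ne : (h t) ^ 2 ≠ 0 := pow_ne_zero 2 (hne t ht)
    have term2 := hnum2.div hden2 hden2ne
    have hG3' := term1.sub term2
    have hd : derivWithin G3 S t =
        (48 * t ^ 3 * h t - 12 * t ^ 4 * h' t) / (h t) ^ 2 -
        ((10 * t ^ 4 * h' t + 2 * t ^ 5 * h'' t) * (h t) ^ 2 -
          2 * t ^ 5 * h' t * (2 * (h t) ^ 1 * h' t)) / ((h t) ^ 2) ^ 2 :=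
      hG3'.derivWithin (hUD t ht)
    show t * (derivWithin G3 S t / t) = _
    rw [hd]
    field_simp [ht.1.ne', hne t ht]
    ring
  -- assemble
  have e2 : EqOn (Dop^[2] F) G2 S := by
    have h2 : Dop^[2] F = Dop (Dop F) := by
      rw [Function.iterate_succ_apply', Function.iterate_one]
    rw [h2]
    exact (key _ _ step1).trans step2
  have e3 : EqOn (Dop^[3] F) G3 S := by
    have h3 : Dop^[3] F = Dop (Dop^[2] F) := Function.iterate_succ_apply' Dop 2 F
    rw [h3]
    exact (key _ _ e2).trans step3
  intro t ht
  calc t * Dop^[4] F t = t * Dop (Dop^[3] F) t := by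
        rw [Function.iterate_succ_apply' Dop 3 F]
    _ = t * Dop G3 t := by rw [key _ _ e3 ht]
    _ = _ := final t ht
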